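/- arXiv:1506.06243 — 3 statements merged into one kernel-verified Lean document; each statement's English description precedes it below -/
import Mathlib

section
/- Let K(t) = Σ_{k∈ℤ} λ_k e^{ikt} with k·λ_k → 0 as |k| → ∞, and suppose the series Σ_{k∈ℤ} k·Δλ_k e^{ikt} (where Δλ_k = λ_k − λ_{k+1}) converges in L¹(−π,π) and K is differentiable with K'(t) = Σ k λ_k i e^{ikt}. Then ∫_{−π}^{π} |t·K'(t)| dt ≤ (π/2) ∫_{−π}^{π} |K(t)| dt + (π/2) ∫_{−π}^{π} |Σ_{k∈ℤ} k·Δλ_k e^{ikt}| dt, provided the right-hand side is finite. -/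
/-!
Multiplying the series of `K'` by `e^{it} - 1` and subtracting the series of `i (e^{it} S - K)`
leaves the telescoping series `∑ (h k - h (k + 1))` with `h k = i (k - 1) λ_k e^{ikt}`, whose sum
vanishes because `k λ_k → 0`. Hence `|e^{it} - 1| ‖K' t‖ ≤ ‖K t‖ + ‖S t‖`, and Jordan's inequality
`|t| ≤ (π / 2) |e^{it} - 1|` on `[-π, π]` turns this into a pointwise bound that integrates to the
claim.
-/

open Real Complex MeasureTheory Filter Topology

theorem HasSum.eq_zero_of_int_sub_succ {E : Type*} [AddCommGroup E] [TopologicalSpace E]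
    [IsTopologicalAddGroup E] [T2Space E] {f : ℤ → E} (hf : Tendsto f cofinite (𝓝 0)) {a : E}
    (ha : HasSum (fun n => f n - f (n + 1)) a) : a = 0 := by
  have hpartial : Tendsto (fun N : ℕ => f (-N) - f N) atTop (𝓝 a) := by
    simpa only [Function.comp_def, Finset.sum_Ico_int_sub] using
      (ha : Tendsto _ atTop (𝓝 a)).comp (Finset.tendsto_Ico_neg (R := ℤ))
  have hcast : Tendsto (fun N : ℕ => (N : ℤ)) atTop cofinite :=
    tendsto_natCast_atTop_atTop.mono_right atTop_le_cofinite
  have hneg : Tendsto (fun N : ℕ => -(N : ℤ)) atTop cofinite :=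
    (tendsto_neg_atTop_atBot.comp tendsto_natCast_atTop_atTop).mono_right atBot_le_cofinite
  simpa using tendsto_nhds_unique hpartial ((hf.comp hneg).sub (hf.comp hcast))

theorem tendsto_zero_of_intCast_mul_tendsto_zero {R : Type*} [SeminormedRing R] [NormSMulClass ℤ R]
    {u : ℤ → R} (hu : Tendsto (fun k : ℤ => (k : R) * u k) cofinite (𝓝 0)) :
    Tendsto u cofinite (𝓝 0) := by
  refine squeeze_zero_norm' ?_ (tendsto_zero_iff_norm_tendsto_zero.mp hu)
  filter_upwards [eventually_cofinite_ne 0] with k hk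
  rw [← zsmul_eq_mul, norm_smul, Int.norm_eq_abs]
  exact le_mul_of_one_le_left (norm_nonneg _) (by exact_mod_cast Int.one_le_abs hk)

theorem abs_le_pi_div_two_mul_norm_exp_I_mul_sub_one {t : ℝ} (ht : |t| ≤ π) :
    |t| ≤ π / 2 * ‖exp (I * t) - 1‖ := by
  have hsin := mul_abs_le_abs_sin (x := t / 2) (by rw [abs_div, abs_two]; linarith)
  rw [norm_exp_I_mul_ofReal_sub_one, Real.norm_eq_abs, abs_mul, abs_two]
  rw [abs_div, abs_two] at hsin
  have := pi_pos
  calc |t| = π / 2 * (2 * (2 / π * (|t| / 2))) := by field_simp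
    _ ≤ π / 2 * (2 * |Real.sin (t / 2)|) := by gcongr

theorem exp_I_mul_sub_one_mul_eq_of_hasSum {lam : ℤ → ℂ}
    (hlam : Tendsto (fun k : ℤ => (k : ℂ) * lam k) cofinite (𝓝 0)) {t : ℝ} {a b c : ℂ}
    (ha : HasSum (fun k : ℤ => lam k * exp (I * k * t)) a)
    (hb : HasSum (fun k : ℤ => (k : ℂ) * lam k * I * exp (I * k * t)) b)
    (hc : HasSum (fun k : ℤ => (k : ℂ) * (lam k - lam (k + 1)) * exp (I * k * t)) c) :
    (exp (I * t) - 1) * b = I * (exp (I * t) * c - a) := by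
  set h : ℤ → ℂ := fun k => I * (((k : ℂ) * lam k - lam k) * exp (I * k * t))
  have hh : Tendsto h cofinite (𝓝 0) := by
    refine squeeze_zero_norm (fun k => le_of_eq ?_) (tendsto_zero_iff_norm_tendsto_zero.mp
      (by simpa using hlam.sub (tendsto_zero_of_intCast_mul_tendsto_zero hlam)))
    rw [norm_mul, norm_I, one_mul, norm_mul,
      show I * k * t = I * ((k * t : ℝ) : ℂ) by push_cast; ring, norm_exp_I_mul_ofReal, mul_one]
  have hsum := (((hc.mul_left (exp (I * t))).sub ha).mul_left I).sub (hb.mul_left (exp (I * t) - 1))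
  have htelescope : HasSum (fun k => h k - h (k + 1))
      (I * (exp (I * t) * c - a) - (exp (I * t) - 1) * b) := by
    refine hsum.congr_fun fun k => ?_
    have hshift : exp (I * ((k + 1 : ℤ) : ℂ) * t) = exp (I * t) * exp (I * k * t) := by
      rw [← Complex.exp_add]; push_cast; ring_nf
    simp only [h, hshift]
    push_cast
    ring
  exact (sub_eq_zero.mp (htelescope.eq_zero_of_int_sub_succ hh)).symm

theorem abs_mul_norm_le_of_exp_I_mul_sub_one_mul_eq {t : ℝ} (ht : |t| ≤ π) {a b c : ℂ}
    (h : (exp (I * t) - 1) * b = I * (exp (I * t) * c - a)) :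
    |t| * ‖b‖ ≤ π / 2 * (‖a‖ + ‖c‖) :=
  calc |t| * ‖b‖ ≤ π / 2 * ‖exp (I * t) - 1‖ * ‖b‖ := by
        gcongr; exact abs_le_pi_div_two_mul_norm_exp_I_mul_sub_one ht
    _ = π / 2 * ‖exp (I * t) * c - a‖ := by
        rw [mul_assoc, ← norm_mul, h, norm_mul, norm_I, one_mul]
    _ ≤ π / 2 * (‖a‖ + ‖c‖) := by
        gcongr
        refine (norm_sub_le _ _).trans_eq ?_
        rw [norm_mul, norm_exp_I_mul_ofReal, one_mul, add_comm]

theorem intervalIntegral.integral_le_of_nonneg_of_le_on {μ : Measure ℝ} {f g : ℝ → ℝ} {a b : ℝ}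
    (hab : a ≤ b) (hf : 0 ≤ f) (hg : IntervalIntegrable g μ a b)
    (hfg : ∀ x ∈ Set.Icc a b, f x ≤ g x) : ∫ x in a..b, f x ∂μ ≤ ∫ x in a..b, g x ∂μ := by
  rw [intervalIntegral.integral_of_le hab, intervalIntegral.integral_of_le hab]
  exact integral_mono_of_nonneg (.of_forall hf) hg.1 <|
    (ae_restrict_mem measurableSet_Ioc).mono fun x hx => hfg x (Set.Ioc_subset_Icc_self hx)

theorem trig_series_derivative_L1_bound_general
    (lam : ℤ → ℂ) (K K' S : ℝ → ℂ)
    (hlam : Tendsto (fun k : ℤ => (k : ℂ) * lam k) cofinite (nhds 0))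
    (hK : ∀ t : ℝ, HasSum (fun k : ℤ => lam k * Complex.exp (Complex.I * k * t)) (K t))
    (hK' : ∀ t : ℝ, HasSum (fun k : ℤ =>
      (k : ℂ) * lam k * Complex.I * Complex.exp (Complex.I * k * t)) (K' t))
    (hS : ∀ t : ℝ, HasSum (fun k : ℤ =>
      (k : ℂ) * (lam k - lam (k + 1)) * Complex.exp (Complex.I * k * t)) (S t))
    (hKint : IntervalIntegrable K volume (-π) π)
    (hSint : IntervalIntegrable S volume (-π) π) :
    ∫ t in (-π)..π, |t| * ‖K' t‖ ≤
      (π / 2) * ∫ t in (-π)..π, ‖K t‖ + (π / 2) * ∫ t in (-π)..π, ‖S t‖ := by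
  have hpointwise : ∀ t ∈ Set.Icc (-π) π, |t| * ‖K' t‖ ≤ π / 2 * (‖K t‖ + ‖S t‖) :=
    fun t ht => abs_mul_norm_le_of_exp_I_mul_sub_one_mul_eq (abs_le.mpr ht)
      (exp_I_mul_sub_one_mul_eq_of_hasSum hlam (hK t) (hK' t) (hS t))
  have hbound : ∫ t in (-π)..π, |t| * ‖K' t‖ ≤
      π / 2 * (∫ t in (-π)..π, ‖K t‖) + π / 2 * ∫ t in (-π)..π, ‖S t‖ :=
    calc ∫ t in (-π)..π, |t| * ‖K' t‖ ≤ ∫ t in (-π)..π, π / 2 * (‖K t‖ + ‖S t‖) :=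
          intervalIntegral.integral_le_of_nonneg_of_le_on (by linarith [pi_pos])
            (fun t => by positivity) ((hKint.norm.add hSint.norm).const_mul _) hpointwise
      _ = π / 2 * (∫ t in (-π)..π, ‖K t‖) + π / 2 * ∫ t in (-π)..π, ‖S t‖ := by
          rw [intervalIntegral.integral_const_mul,
            intervalIntegral.integral_add hKint.norm hSint.norm, mul_add]
  -- The first `∫` on the right extends to the end of the line, so the bound needs `π ^ 2 ≥ 1`.
  have hS_nonneg : 0 ≤ ∫ t in (-π)..π, ‖S t‖ :=
    intervalIntegral.integral_nonneg (by linarith [pi_pos]) fun t _ => norm_nonneg _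
  have hpi_sq : (1 : ℝ) ≤ π ^ 2 := by nlinarith [pi_gt_three]
  rw [intervalIntegral.integral_add hKint.norm intervalIntegrable_const,
    intervalIntegral.integral_const, smul_eq_mul, mul_add]
  refine hbound.trans (by gcongr; nlinarith [mul_le_mul_of_nonneg_left hpi_sq hS_nonneg])

theorem trig_series_derivative_L1_bound
    (lam : ℤ → ℂ) (K K' S : ℝ → ℂ)
    (hlam : Tendsto (fun k : ℤ => (k : ℂ) * lam k) cofinite (nhds 0))
    (hK : ∀ t : ℝ, HasSum (fun k : ℤ => lam k * Complex.exp (Complex.I * k * t)) (K t))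
    (hK' : ∀ t : ℝ, HasSum (fun k : ℤ =>
      (k : ℂ) * lam k * Complex.I * Complex.exp (Complex.I * k * t)) (K' t))
    (hderiv : ∀ t : ℝ, HasDerivAt K (K' t) t)
    (hS : ∀ t : ℝ, HasSum (fun k : ℤ =>
      (k : ℂ) * (lam k - lam (k + 1)) * Complex.exp (Complex.I * k * t)) (S t))
    (hKint : IntervalIntegrable K volume (-π) π)
    (hSint : IntervalIntegrable S volume (-π) π) :
    ∫ t in (-π)..π, |t| * ‖K' t‖ ≤
      (π / 2) * ∫ t in (-π)..π, ‖K t‖ + (π / 2) * ∫ t in (-π)..π, ‖S t‖ :=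
  trig_series_derivative_L1_bound_general lam K K' S hlam hK hK' hS hKint hSint
end

section
/- Let Φ_n be the Fejér kernel, Φ_n(t) = sin²((n+1)t/2) / (2(n+1) sin²(t/2)). There exists an absolute constant c > 0 such that for every continuous function F₀ on [−π,π] and every n ≥ 1, |F₀(0) − (1/π) ∫_{−π}^{π} F₀(t) Φ_n(t) dt| ≤ c · ω(F₀; ln(n+1)/(n+1)), where ω is the modulus of continuity of F₀ on [−π,π]. -/
open Real MeasureTheory Set Finset

/-!
Since `Φₙ ≥ 0` has mass `π`, the error is `(1/π) ∫ (F₀ 0 - F₀ t) Φₙ(t) dt`, and chaining the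
modulus of continuity along `[0, t]` gives `|F₀ 0 - F₀ t| ≤ (|t|/δ + 1) ω(δ)`. Hence the error is at
most `ω(δ) (1 + (πδ)⁻¹ ∫ |t| Φₙ(t) dt)`. The closed form `2 sin²(t/2) (n+1) Φₙ(t) = sin²((n+1)t/2)`
with Jordan's inequality gives `Φₙ(t) ≤ π²/(2(n+1)t²)`, and trivially `Φₙ ≤ n + 1`; splitting at
`|t| = 1/(n+1)` shows `∫ |t| Φₙ = O(log(n+1)/(n+1))`, which is `O(δ)` for `δ = log(n+1)/(n+1)`.
-/

section ModulusOfContinuity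

variable {E X : Type*} [NormedAddCommGroup E] [NormedSpace ℝ E] [PseudoMetricSpace X]
  {f : E → X} {s : Set E} {δ w : ℝ}

theorem Convex.dist_le_nat_mul_of_modulus (hs : Convex ℝ s)
    (hf : ∀ x ∈ s, ∀ y ∈ s, dist x y ≤ δ → dist (f x) (f y) ≤ w) (m : ℕ) :
    ∀ x ∈ s, ∀ y ∈ s, dist x y ≤ m * δ → dist (f x) (f y) ≤ m * w := by
  induction m with
  | zero =>
    intro x _ y _ hxy
    simp [dist_le_zero.mp (by simpa using hxy)]
  | succ m ih =>
    intro x hx y hy hxy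
    have hm : (0 : ℝ) < m + 1 := by positivity
    push_cast at hxy
    set z := AffineMap.lineMap x y ((m + 1 : ℝ)⁻¹)
    have hz : z ∈ s :=
      hs.lineMap_mem hx hy ⟨by positivity, inv_le_one_of_one_le₀ (by simp)⟩
    have hxz : dist x z ≤ δ := by
      rw [dist_comm, dist_lineMap_left, Real.norm_eq_abs, abs_of_pos (inv_pos.mpr hm),
        inv_mul_le_iff₀ hm]
      linarith
    have hzy : dist z y ≤ m * δ := by
      rw [dist_lineMap_right, Real.norm_eq_abs, show 1 - (m + 1 : ℝ)⁻¹ = m / (m + 1) by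
        field_simp; ring, abs_of_nonneg (by positivity), div_mul_eq_mul_div, div_le_iff₀ hm]
      nlinarith [m.cast_nonneg (α := ℝ)]
    calc dist (f x) (f y) ≤ dist (f x) (f z) + dist (f z) (f y) := dist_triangle _ _ _
      _ ≤ w + m * w := add_le_add (hf x hx z hz hxz) (ih z hz y hy hzy)
      _ = (m + 1 : ℕ) * w := by push_cast; ring

theorem Convex.dist_le_of_modulus (hs : Convex ℝ s) (hδ : 0 < δ)
    (hf : ∀ x ∈ s, ∀ y ∈ s, dist x y ≤ δ → dist (f x) (f y) ≤ w) {x y : E} (hx : x ∈ s)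
    (hy : y ∈ s) : dist (f x) (f y) ≤ (dist x y / δ + 1) * w := by
  have hw : 0 ≤ w := dist_nonneg.trans (hf x hx x hx (by simpa using hδ.le))
  calc dist (f x) (f y) ≤ ⌈dist x y / δ⌉₊ * w :=
        hs.dist_le_nat_mul_of_modulus hf _ x hx y hy ((div_le_iff₀ hδ).mp (Nat.le_ceil _))
    _ ≤ (dist x y / δ + 1) * w :=
        mul_le_mul_of_nonneg_right (Nat.ceil_lt_add_one (by positivity)).le hw

end ModulusOfContinuity

theorem abs_sub_weighted_mean_le_of_modulus {F K : ℝ → ℝ} {a b x₀ δ w : ℝ} (hab : a ≤ b)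
    (hx₀ : x₀ ∈ Icc a b) (hδ : 0 < δ) (hF : ContinuousOn F (Icc a b))
    (hK : IntervalIntegrable K volume a b) (hK_nonneg : ∀ t ∈ Icc a b, 0 ≤ K t)
    (hK_pos : 0 < ∫ t in a..b, K t)
    (hmod : ∀ t ∈ Icc a b, ∀ s ∈ Icc a b, |t - s| ≤ δ → |F t - F s| ≤ w) :
    |F x₀ - (∫ t in a..b, K t)⁻¹ * ∫ t in a..b, F t * K t| ≤
      w * (1 + (∫ t in a..b, |t - x₀| * K t) / ((∫ t in a..b, K t) * δ)) := by
  set I := ∫ t in a..b, K t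
  set M := ∫ t in a..b, |t - x₀| * K t
  have huIcc : uIcc a b = Icc a b := uIcc_of_le hab
  have hFK : IntervalIntegrable (fun t => F t * K t) volume a b :=
    hK.continuousOn_mul (huIcc ▸ hF)
  have hdiff : IntervalIntegrable (fun t => (F x₀ - F t) * K t) volume a b :=
    hK.continuousOn_mul (huIcc ▸ continuousOn_const.sub hF)
  have hmoment : IntervalIntegrable (fun t => |t - x₀| * K t) volume a b :=
    hK.continuousOn_mul (by fun_prop)
  have hpointwise : ∀ t ∈ Icc a b,
      |(F x₀ - F t) * K t| ≤ w / δ * (|t - x₀| * K t) + w * K t := by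
    intro t ht
    have h := (convex_Icc a b).dist_le_of_modulus (f := F) hδ
      (by simpa only [Real.dist_eq] using hmod) hx₀ ht
    rw [Real.dist_eq, Real.dist_eq, abs_sub_comm x₀] at h
    rw [abs_mul, abs_of_nonneg (hK_nonneg t ht)]
    calc |F x₀ - F t| * K t ≤ (|t - x₀| / δ + 1) * w * K t :=
          mul_le_mul_of_nonneg_right h (hK_nonneg t ht)
      _ = w / δ * (|t - x₀| * K t) + w * K t := by ring
  have hcentre :
      F x₀ - I⁻¹ * ∫ t in a..b, F t * K t = I⁻¹ * ∫ t in a..b, (F x₀ - F t) * K t := by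
    simp only [sub_mul, intervalIntegral.integral_sub (hK.const_mul _) hFK,
      intervalIntegral.integral_const_mul]
    field_simp
    rfl
  calc |F x₀ - I⁻¹ * ∫ t in a..b, F t * K t|
      = I⁻¹ * |∫ t in a..b, (F x₀ - F t) * K t| := by
        rw [hcentre, abs_mul, abs_of_pos (inv_pos.mpr hK_pos)]
    _ ≤ I⁻¹ * ∫ t in a..b, (w / δ * (|t - x₀| * K t) + w * K t) := by
        gcongr
        exact (intervalIntegral.abs_integral_le_integral_abs hab).trans
          (intervalIntegral.integral_mono_on hab hdiff.abs
            ((hmoment.const_mul _).add (hK.const_mul _)) hpointwise)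
    _ = w * (1 + M / (I * δ)) := by
        rw [intervalIntegral.integral_add (hmoment.const_mul _) (hK.const_mul _),
          intervalIntegral.integral_const_mul, intervalIntegral.integral_const_mul]
        field_simp
        ring

theorem Real.sin_sq_sub_sin_sq (x y : ℝ) : sin x ^ 2 - sin y ^ 2 = sin (x + y) * sin (x - y) := by
  rw [sin_add, sin_sub]
  linear_combination sin y ^ 2 * sin_sq_add_cos_sq x - sin x ^ 2 * sin_sq_add_cos_sq y

theorem Function.Even.integral_neg_eq_two_mul {g : ℝ → ℝ} (hg : Function.Even g)
    (hc : Continuous g) (a : ℝ) : ∫ t in (-a)..a, g t = 2 * ∫ t in 0..a, g t := by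
  have hleft : ∫ t in (-a)..0, g t = ∫ t in 0..a, g t := by
    simpa [hg _] using (intervalIntegral.integral_comp_neg (a := 0) (b := a) g).symm
  rw [← intervalIntegral.integral_add_adjacent_intervals (b := 0) (hc.intervalIntegrable _ _)
    (hc.intervalIntegrable _ _), hleft, two_mul]

theorem two_mul_sin_half_mul_dirichlet_sum (m : ℕ) (t : ℝ) :
    2 * sin (t / 2) * (1 / 2 + ∑ k ∈ Finset.Icc 1 m, cos (k * t)) = sin ((m + 1 / 2) * t) := by
  induction m with
  | zero =>
    rw [Finset.Icc_eq_empty_of_lt zero_lt_one, sum_empty, Nat.cast_zero]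
    ring_nf
  | succ m ih =>
    rw [sum_Icc_succ_top (by omega)]
    have h := sin_sub_sin ((m + 1 + 1 / 2) * t) ((m + 1 / 2) * t)
    rw [show ((m + 1 + 1 / 2) * t - (m + 1 / 2) * t) / 2 = t / 2 by ring,
      show ((m + 1 + 1 / 2) * t + (m + 1 / 2) * t) / 2 = (m + 1) * t by ring] at h
    push_cast
    linear_combination ih - h

theorem two_mul_sin_sq_half_mul_fejer_sum (n : ℕ) (t : ℝ) :
    2 * sin (t / 2) ^ 2 * ((n + 1) / 2 + ∑ k ∈ Finset.Icc 1 n, ((n + 1 - k) * cos (k * t))) =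
      sin ((n + 1) * t / 2) ^ 2 := by
  induction n with
  | zero =>
    rw [Finset.Icc_eq_empty_of_lt zero_lt_one, sum_empty, Nat.cast_zero]
    ring_nf
  | succ n ih =>
    have hsum : ∑ k ∈ Finset.Icc 1 (n + 1), (((n + 1 : ℕ) + 1 - k) * cos (k * t)) =
        ∑ k ∈ Finset.Icc 1 n, ((n + 1 - k) * cos (k * t)) +
          ∑ k ∈ Finset.Icc 1 (n + 1), cos (k * t) := by
      rw [sum_Icc_succ_top (by omega), sum_Icc_succ_top (by omega), ← add_assoc,
        ← sum_add_distrib]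
      push_cast
      congr 1
      · exact sum_congr rfl fun k _ => by ring
      · ring
    have hd := two_mul_sin_half_mul_dirichlet_sum (n + 1) t
    have hs := sin_sq_sub_sin_sq ((n + 1 + 1) * t / 2) ((n + 1) * t / 2)
    rw [show (n + 1 + 1) * t / 2 + (n + 1) * t / 2 = (n + 1 + 1 / 2) * t by ring,
      show (n + 1 + 1) * t / 2 - (n + 1) * t / 2 = t / 2 by ring] at hs
    rw [hsum]
    push_cast at hd ⊢
    linear_combination ih + sin (t / 2) * hd - hs

noncomputable def fejerKernel (n : ℕ) (t : ℝ) : ℝ :=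
  1 / 2 + ∑ k ∈ Finset.Icc 1 n, (1 - (k : ℝ) / (n + 1)) * cos (k * t)

namespace fejerKernel

variable (n : ℕ)

theorem two_mul_sin_sq_half_mul (t : ℝ) :
    2 * sin (t / 2) ^ 2 * ((n + 1) * fejerKernel n t) = sin ((n + 1) * t / 2) ^ 2 := by
  rw [← two_mul_sin_sq_half_mul_fejer_sum, fejerKernel, mul_add, mul_sum]
  congr 2
  · ring
  · refine sum_congr rfl fun k _ => ?_
    field_simp

theorem coeff_nonneg {k : ℕ} (hk : k ∈ Finset.Icc 1 n) : 0 ≤ 1 - (k : ℝ) / (n + 1) := by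
  rw [sub_nonneg, div_le_one (by positivity)]
  exact_mod_cast (Finset.mem_Icc.mp hk).2.trans n.le_succ

theorem nonneg (t : ℝ) : 0 ≤ fejerKernel n t := by
  by_cases hs : sin (t / 2) = 0
  · obtain ⟨m, hm⟩ := sin_eq_zero_iff.mp hs
    refine add_nonneg (by norm_num) (sum_nonneg fun k hk => ?_)
    have hcos : cos (k * t) = 1 := by
      rw [show (k : ℝ) * t = ((k * m : ℤ) : ℝ) * (2 * π) by
          rw [show t = 2 * (m * π) by linarith]; push_cast; ring,
        cos_int_mul_two_pi]
    rw [hcos, mul_one]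
    exact coeff_nonneg n hk
  · have h := two_mul_sin_sq_half_mul n t
    have hs2 : 0 < 2 * sin (t / 2) ^ 2 * (n + 1) := by positivity
    nlinarith [sq_nonneg (sin ((n + 1) * t / 2))]

theorem le_add_one (t : ℝ) : fejerKernel n t ≤ n + 1 := by
  have hterm : ∀ k ∈ Finset.Icc 1 n, (1 - (k : ℝ) / (n + 1)) * cos (k * t) ≤ 1 := fun k hk =>
    calc (1 - (k : ℝ) / (n + 1)) * cos (k * t) ≤ 1 - (k : ℝ) / (n + 1) :=
          mul_le_of_le_one_right (coeff_nonneg n hk) (cos_le_one _)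
      _ ≤ 1 := sub_le_self _ (by positivity)
  have := sum_le_card_nsmul _ _ 1 hterm
  simp only [Nat.card_Icc, Nat.add_sub_cancel, nsmul_eq_mul, mul_one] at this
  unfold fejerKernel
  linarith

theorem even : Function.Even (fejerKernel n) := fun t => by
  simp only [fejerKernel, mul_neg, cos_neg]

@[fun_prop]
theorem continuous : Continuous (fejerKernel n) := by
  unfold fejerKernel
  fun_prop

theorem integral : ∫ t in (-π)..π, fejerKernel n t = π := by
  have hterm : ∀ k ∈ Finset.Icc 1 n,
      ∫ t in (-π)..π, (1 - (k : ℝ) / (n + 1)) * cos (k * t) = 0 := fun k hk => by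
    have hk : (k : ℝ) ≠ 0 :=
      Nat.cast_ne_zero.mpr (Nat.one_le_iff_ne_zero.mp (Finset.mem_Icc.mp hk).1)
    rw [intervalIntegral.integral_const_mul, intervalIntegral.integral_comp_mul_left cos hk,
      integral_cos, mul_neg, sin_neg, sin_nat_mul_pi]
    simp
  unfold fejerKernel
  rw [intervalIntegral.integral_add intervalIntegrable_const
      (by apply Continuous.intervalIntegrable; fun_prop),
    intervalIntegral.integral_finsetSum fun k _ => by
      apply Continuous.intervalIntegrable; fun_prop,
    sum_eq_zero hterm, intervalIntegral.integral_const, smul_eq_mul]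
  ring

theorem le_of_pos_of_le_pi {t : ℝ} (ht : 0 < t) (htπ : t ≤ π) :
    fejerKernel n t ≤ π ^ 2 / (2 * (n + 1) * t ^ 2) := by
  have hjordan : t / π ≤ sin (t / 2) := by
    have := mul_le_sin (x := t / 2) (by positivity) (by linarith)
    calc t / π = 2 / π * (t / 2) := by ring
      _ ≤ sin (t / 2) := this
  have hsq : t ^ 2 ≤ π ^ 2 * sin (t / 2) ^ 2 := by
    have := pow_le_pow_left₀ (by positivity) hjordan 2
    rw [div_pow, div_le_iff₀ (by positivity)] at this
    linarith
  have h := two_mul_sin_sq_half_mul n t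
  have hK := nonneg n t
  rw [le_div_iff₀ (by positivity)]
  nlinarith [sin_sq_le_one ((n + 1) * t / 2), mul_le_mul_of_nonneg_left hsq
    (by positivity : (0 : ℝ) ≤ (n + 1) * fejerKernel n t)]

theorem integral_mul_le :
    ∫ t in 0..π, t * fejerKernel n t ≤ (1 + π ^ 2 / 2 * log (π * (n + 1))) / (n + 1) := by
  have hN : (0 : ℝ) < n + 1 := by positivity
  set a : ℝ := (n + 1)⁻¹
  have ha : 0 < a := by positivity
  have haπ : a ≤ π := (inv_le_one_of_one_le₀ (by simp)).trans (by linarith [pi_gt_three])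
  have hint : ∀ u v, IntervalIntegrable (fun t => t * fejerKernel n t) volume u v := fun u v =>
    by apply Continuous.intervalIntegrable; fun_prop
  have hnear : ∫ t in 0..a, t * fejerKernel n t ≤ ∫ t in 0..a, (1 : ℝ) := by
    refine intervalIntegral.integral_mono_on ha.le (hint _ _) intervalIntegrable_const
      fun t ht => ?_
    calc t * fejerKernel n t ≤ a * (n + 1) :=
          mul_le_mul ht.2 (le_add_one n t) (nonneg n t) ha.le
      _ = 1 := inv_mul_cancel₀ hN.ne'
  have hfar : ∫ t in a..π, t * fejerKernel n t ≤ ∫ t in a..π, π ^ 2 / (2 * (n + 1)) * t⁻¹ := by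
    refine intervalIntegral.integral_mono_on haπ (hint _ _)
      ((ContinuousOn.intervalIntegrable (continuousOn_inv₀.mono fun t ht =>
        (ha.trans_le ((uIcc_of_le haπ).le ht).1).ne')).const_mul _) fun t ht => ?_
    have ht0 : 0 < t := ha.trans_le ht.1
    calc t * fejerKernel n t ≤ t * (π ^ 2 / (2 * (n + 1) * t ^ 2)) :=
          mul_le_mul_of_nonneg_left (le_of_pos_of_le_pi n ht0 ht.2) ht0.le
      _ = π ^ 2 / (2 * (n + 1)) * t⁻¹ := by field_simp
  rw [intervalIntegral.integral_const, sub_zero, smul_eq_mul, mul_one] at hnear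
  rw [intervalIntegral.integral_const_mul, integral_inv_of_pos ha pi_pos, div_inv_eq_mul] at hfar
  calc ∫ t in 0..π, t * fejerKernel n t
      = (∫ t in 0..a, t * fejerKernel n t) + ∫ t in a..π, t * fejerKernel n t :=
        (intervalIntegral.integral_add_adjacent_intervals (hint 0 a) (hint a π)).symm
    _ ≤ a + π ^ 2 / (2 * (n + 1)) * log (π * (n + 1)) := add_le_add hnear hfar
    _ = (1 + π ^ 2 / 2 * log (π * (n + 1))) / (n + 1) := by unfold a; field_simp

theorem integral_abs_mul_le (hn : 1 ≤ n) :
    ∫ t in (-π)..π, |t| * fejerKernel n t ≤ (3 + 3 * π ^ 2) * (log (n + 1) / (n + 1)) := by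
  have hN : (2 : ℝ) ≤ n + 1 := by exact_mod_cast Nat.succ_le_succ hn
  have hL : 2 / 3 ≤ log (n + 1) :=
    (log_two_gt_d9.le.trans' (by norm_num)).trans (log_le_log two_pos hN)
  have hlog : log (π * (n + 1)) ≤ 3 * log (n + 1) := by
    rw [show (3 : ℝ) * log (n + 1) = log ((n + 1) ^ 3) by rw [log_pow]; norm_num]
    refine log_le_log (by positivity) ?_
    have hsq : π ≤ (n + 1) ^ 2 := by nlinarith [pi_le_four]
    nlinarith
  have heven : Function.Even fun t => |t| * fejerKernel n t := fun t => by
    simp only [abs_neg, even n t]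
  rw [heven.integral_neg_eq_two_mul (by fun_prop),
    intervalIntegral.integral_congr fun t ht => by
      rw [abs_of_nonneg ((uIcc_of_le pi_pos.le).le ht).1]]
  calc 2 * ∫ t in 0..π, t * fejerKernel n t
      ≤ 2 * ((1 + π ^ 2 / 2 * log (π * (n + 1))) / (n + 1)) := by gcongr; exact integral_mul_le n
    _ ≤ (3 + 3 * π ^ 2) * (log (n + 1) / (n + 1)) := by
      rw [← mul_div_assoc, ← mul_div_assoc]
      refine div_le_div_of_nonneg_right ?_ (by positivity)
      nlinarith [mul_le_mul_of_nonneg_left hlog (sq_nonneg π)]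

end fejerKernel

theorem fejer_mean_modulus_of_continuity_bound :
    ∃ c : ℝ, 0 < c ∧
      ∀ (F₀ : ℝ → ℝ) (ω : ℝ → ℝ) (n : ℕ),
        ContinuousOn F₀ (Icc (-π) π) →
        (∀ δ : ℝ, 0 ≤ ω δ) →
        (∀ δ : ℝ, ∀ t ∈ Icc (-π) π, ∀ s ∈ Icc (-π) π, |t - s| ≤ δ →
          |F₀ t - F₀ s| ≤ ω δ) →
        1 ≤ n →
        |F₀ 0 - (1 / π) * ∫ t in (-π)..π,
            F₀ t * (1/2 + ∑ k ∈ Finset.Icc 1 n,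
              (1 - (k : ℝ) / (n + 1)) * Real.cos (k * t))| ≤
          c * ω (Real.log (n + 1) / (n + 1)) := by
  refine ⟨1 + (3 + 3 * π ^ 2) / π, by positivity, fun F₀ ω n hF hω hmod hn => ?_⟩
  set δ := log (n + 1) / (n + 1)
  have hδ : 0 < δ := div_pos (log_pos (by exact_mod_cast Nat.succ_lt_succ hn)) (by positivity)
  have hmean := abs_sub_weighted_mean_le_of_modulus (K := fejerKernel n) (x₀ := 0)
    (by linarith [pi_pos]) ⟨by linarith [pi_pos], pi_pos.le⟩ hδ hF
    ((fejerKernel.continuous n).intervalIntegrable _ _) (fun t _ => fejerKernel.nonneg n t)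
    (by rw [fejerKernel.integral]; exact pi_pos) (hmod δ)
  simp only [fejerKernel.integral, sub_zero, ← one_div] at hmean
  refine hmean.trans ?_
  rw [mul_comm _ (ω δ)]
  gcongr ω δ * (1 + ?_)
  · exact hω δ
  rw [div_le_div_iff₀ (by positivity) pi_pos, mul_comm π δ, ← mul_assoc]
  gcongr
  exact fejerKernel.integral_abs_mul_le n hn
end

section
/- If f ∈ L¹(𝕋), F(x) = ∫_0^x f(t) dt, and ε_n → 0⁺, then the Lebesgue means Λ_n(f; x) = Σ_{k∈ℤ} (sin(k ε_n)/(k ε_n)) f̂_k e^{ikx} (coefficient 1 at k = 0) satisfy Λ_n(f; x) = (F(x + ε_n) − F(x − ε_n))/(2ε_n); consequently Λ_n(f; x) → d_f(x) at every d-point x of f. -/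
/-!
The multiplier `sin (k ε) / (k ε)` is the mean of `e^{iku}` over `u ∈ [-ε, ε]`, so Fubini and the
periodicity of `f` show that `Λ_n(f; ·)` is the Fourier series of the continuous periodic function
`y ↦ (2ε)⁻¹ ∫_{-ε}^{ε} f (y + u) du = (F (y + ε) - F (y - ε)) / (2ε)`. Convergence of the series
at `x = 0` makes its coefficients summable, so it converges everywhere to that function. The
resulting symmetric difference quotients of `F` tend to `F'(x)` wherever `F` is differentiable.
-/

open Real Complex MeasureTheory Filter

section Translates

variable {E : Type*} [NormedAddCommGroup E]

theorem MeasureTheory.LocallyIntegrable.intervalIntegrable {f : ℝ → E} (hf : LocallyIntegrable f)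
    (a b : ℝ) : IntervalIntegrable f volume a b :=
  (hf.integrableOn_isCompact isCompact_uIcc).intervalIntegrable

variable [NormedSpace ℝ E]

theorem MeasureTheory.LocallyIntegrable.integral_comp_add_eq_sub {f : ℝ → E}
    (hf : LocallyIntegrable f) (y a b : ℝ) :
    ∫ u in a..b, f (y + u) = (∫ t in 0..y + b, f t) - ∫ t in 0..y + a, f t := by
  rw [intervalIntegral.integral_comp_add_left f,
    intervalIntegral.integral_interval_sub_left (hf.intervalIntegrable _ _)
      (hf.intervalIntegrable _ _)]

theorem MeasureTheory.LocallyIntegrable.continuous_integral_comp_add {f : ℝ → E}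
    (hf : LocallyIntegrable f) (a b : ℝ) : Continuous fun y => ∫ u in a..b, f (y + u) := by
  have hprim := intervalIntegral.continuous_primitive hf.intervalIntegrable 0
  simp_rw [hf.integral_comp_add_eq_sub _ a b]
  exact (hprim.comp (continuous_id.add continuous_const)).sub
    (hprim.comp (continuous_id.add continuous_const))

open scoped Pointwise in
theorem MeasureTheory.LocallyIntegrable.integrableOn_comp_add_prod {f : ℝ → E}
    (hf : LocallyIntegrable f) {s t : Set ℝ} (hs : IsCompact s) (ht : IsCompact t) :
    IntegrableOn (fun p : ℝ × ℝ => f (p.1 + p.2)) (s ×ˢ t) := by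
  have hsnd : IntegrableOn (fun p : ℝ × ℝ => f p.2) (s ×ˢ (s + t)) := by
    rw [IntegrableOn, Measure.volume_eq_prod, ← Measure.prod_restrict]
    simpa only [one_smul] using
      ((continuousOn_const : ContinuousOn (fun _ : ℝ => (1 : ℝ)) s).integrableOn_compact
        hs).smul_prod (hf.integrableOn_isCompact (hs.add ht))
  have hshear := (measurePreserving_prod_add (volume : Measure ℝ) volume).integrableOn_comp_preimage
    (MeasurableEquiv.shearAddRight ℝ).measurableEmbedding (f := fun p : ℝ × ℝ => f p.2)
      (s := s ×ˢ (s + t))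
  rw [← Measure.volume_eq_prod] at hshear
  exact (hshear.2 hsnd).mono_set fun p hp => ⟨hp.1, Set.add_mem_add hp.1 hp.2⟩

end Translates

section FourierTranslates

variable {E : Type*} [NormedAddCommGroup E] [NormedSpace ℂ E] {T : ℝ}

theorem fourier_coe_add (k : ℤ) (x y : ℝ) :
    fourier k ((x + y : ℝ) : AddCircle T) =
      fourier k (x : AddCircle T) * fourier k (y : AddCircle T) := by
  simp only [AddCircle.coe_add, fourier_apply, smul_add, AddCircle.toCircle_add, Circle.coe_mul]

theorem Function.Periodic.integral_fourier_smul_comp_add {f : ℝ → E} (hf : Function.Periodic f T)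
    (k : ℤ) (c u : ℝ) :
    ∫ y in c..c + T, fourier (-k) (y : AddCircle T) • f (y + u) =
      fourier k (u : AddCircle T) • ∫ t in c..c + T, fourier (-k) (t : AddCircle T) • f t := by
  have hshift : ∀ y : ℝ, fourier (-k) (y : AddCircle T) • f (y + u) =
      fourier k (u : AddCircle T) • (fourier (-k) ((y + u : ℝ) : AddCircle T) • f (y + u)) := by
    intro y
    rw [fourier_coe_add, smul_smul, mul_left_comm, ← fourier_add, add_neg_cancel, fourier_zero,
      mul_one]
  have hper : Function.Periodic (fun t : ℝ => fourier (-k) (t : AddCircle T) • f t) T := by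
    intro t
    dsimp only
    rw [AddCircle.coe_add_period, hf t]
  rw [intervalIntegral.integral_congr fun y _ => hshift y, intervalIntegral.integral_smul,
    intervalIntegral.integral_comp_add_right (fun t => fourier (-k) (t : AddCircle T) • f t),
    add_right_comm, hper.intervalIntegral_add_eq (c + u) c]

theorem Function.Periodic.integral_fourier_smul_integral_comp_add [CompleteSpace E] {f : ℝ → E}
    (hf : Function.Periodic f T) (hloc : LocallyIntegrable f) (k : ℤ) (c a b : ℝ) :
    ∫ y in c..c + T, fourier (-k) (y : AddCircle T) • ∫ u in a..b, f (y + u) =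
      (∫ u in a..b, fourier k (u : AddCircle T)) •
        ∫ t in c..c + T, fourier (-k) (t : AddCircle T) • f t := by
  have hint : IntegrableOn
      (Function.uncurry fun (y u : ℝ) => fourier (-k) (y : AddCircle T) • f (y + u))
      (Set.uIoc c (c + T) ×ˢ Set.uIoc a b) := by
    refine IntegrableOn.mono_set ?_ (Set.prod_mono Set.uIoc_subset_uIcc Set.uIoc_subset_uIcc)
    exact (hloc.integrableOn_comp_add_prod isCompact_uIcc isCompact_uIcc).continuousOn_smul
      ((map_continuous _).comp (AddCircle.continuous_mk' T |>.comp continuous_fst)).continuousOn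
      (isCompact_uIcc.prod isCompact_uIcc)
  calc _ = ∫ y in c..c + T, ∫ u in a..b, fourier (-k) (y : AddCircle T) • f (y + u) := by
        simp_rw [intervalIntegral.integral_smul]
    _ = ∫ u in a..b, ∫ y in c..c + T, fourier (-k) (y : AddCircle T) • f (y + u) :=
        intervalIntegral_intervalIntegral_swap hint
    _ = _ := by
        rw [intervalIntegral.integral_congr fun u _ => hf.integral_fourier_smul_comp_add k c u]
        exact intervalIntegral.integral_smul_const _ _

end FourierTranslates

theorem Function.Periodic.hasSum_fourier_series_of_summable {T : ℝ} [Fact (0 < T)] {g : ℝ → ℂ}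
    (hg : Function.Periodic g T) (hcont : Continuous g) (c : ℝ)
    (hsum : Summable fun k : ℤ =>
      (1 / T) • ∫ y in c..c + T, fourier (-k) (y : AddCircle T) • g y) (x : ℝ) :
    HasSum (fun k : ℤ => ((1 / T) • ∫ y in c..c + T, fourier (-k) (y : AddCircle T) • g y) •
      fourier k (x : AddCircle T)) (g x) := by
  let G : C(AddCircle T, ℂ) := ⟨hg.lift, hcont.quotient_liftOn' _⟩
  have hcoeff : fourierCoeff G = fun k : ℤ =>
      (1 / T) • ∫ y in c..c + T, fourier (-k) (y : AddCircle T) • g y := by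
    ext k
    exact fourierCoeff_eq_intervalIntegral G k c
  have h := has_pointwise_sum_fourier_series_of_summable (f := G) (by rwa [hcoeff]) x
  rw [hcoeff] at h
  exact h

theorem integral_exp_mul_mul_I_eq_sinc (ξ e : ℝ) :
    ∫ u in -e..e, exp (ξ * u * I) = 2 * e * sinc (ξ * e) := by
  rcases eq_or_ne ξ 0 with rfl | hξ
  · simp only [ofReal_zero, zero_mul, Complex.exp_zero, intervalIntegral.integral_const,
      sub_neg_eq_add, real_smul, mul_one, sinc_zero]
    push_cast
    ring
  · have h := intervalIntegral.integral_comp_mul_left (fun t : ℝ => exp (t * I)) hξ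
      (a := -e) (b := e)
    simp only [ofReal_mul, mul_neg] at h
    have hξ' : (ξ : ℂ) ≠ 0 := ofReal_ne_zero.mpr hξ
    rw [h, integral_exp_mul_I_eq_sinc, ofReal_mul, real_smul, ofReal_inv]
    field_simp

theorem fourier_coe_two_pi (k : ℤ) (t : ℝ) :
    fourier k (t : AddCircle (2 * π)) = exp (I * k * t) := by
  rw [fourier_coe_apply]
  congr 1
  push_cast
  field_simp

theorem integral_fourier_two_pi_eq_sinc (k : ℤ) (e : ℝ) :
    ∫ u in -e..e, fourier k (u : AddCircle (2 * π)) = 2 * e * sinc (k * e) := by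
  simp_rw [fourier_coe_two_pi, ← integral_exp_mul_mul_I_eq_sinc, ofReal_intCast, mul_comm I,
    mul_right_comm]

theorem ite_sin_div_eq_sinc {e : ℝ} (he : e ≠ 0) (k : ℤ) :
    (if k = 0 then 1 else ((Real.sin (k * e) / (k * e) : ℝ) : ℂ)) = (sinc (k * e) : ℂ) := by
  rw [sinc_apply]
  split_ifs <;> simp_all

theorem hasSum_sinc_mul_fourier_series {f : ℝ → ℂ} (hf : Function.Periodic f (2 * π))
    (hloc : LocallyIntegrable f) {e : ℝ} (he : e ≠ 0)
    (hsum : Summable fun k : ℤ => (sinc (k * e) : ℂ) *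
      ((1 / (2 * π) : ℂ) * ∫ t in (-π)..π, f t * exp (-I * k * t))) (x : ℝ) :
    HasSum (fun k : ℤ => (sinc (k * e) : ℂ) *
      ((1 / (2 * π) : ℂ) * ∫ t in (-π)..π, f t * exp (-I * k * t)) * exp (I * k * x))
      ((2 * e : ℂ)⁻¹ * ∫ u in -e..e, f (x + u)) := by
  have : Fact (0 < 2 * π) := ⟨two_pi_pos⟩
  set g : ℝ → ℂ := fun y => (2 * e : ℂ)⁻¹ * ∫ u in -e..e, f (y + u) with hg
  have hgper : Function.Periodic g (2 * π) := fun y => by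
    simp only [hg, add_right_comm y, hf _]
  have hgcont : Continuous g := continuous_const.mul (hloc.continuous_integral_comp_add _ _)
  have hcoeff : ∀ k : ℤ,
      (1 / (2 * π)) • ∫ y in -π..-π + 2 * π, fourier (-k) (y : AddCircle (2 * π)) • g y =
        (sinc (k * e) : ℂ) * ((1 / (2 * π) : ℂ) * ∫ t in (-π)..π, f t * exp (-I * k * t)) := by
    intro k
    have hmul : ∀ y : ℝ, fourier (-k) (y : AddCircle (2 * π)) • g y = (2 * e : ℂ)⁻¹ *
        (fourier (-k) (y : AddCircle (2 * π)) • ∫ u in -e..e, f (y + u)) := fun y => by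
      simp only [hg, smul_eq_mul]
      ring
    have hexp : ∀ t : ℝ, fourier (-k) (t : AddCircle (2 * π)) • f t = f t * exp (-I * k * t) :=
      fun t => by
        rw [fourier_coe_two_pi, smul_eq_mul, mul_comm]
        push_cast
        ring_nf
    have he' : (e : ℂ) ≠ 0 := ofReal_ne_zero.mpr he
    rw [intervalIntegral.integral_congr fun y _ => hmul y, intervalIntegral.integral_const_mul,
      hf.integral_fourier_smul_integral_comp_add hloc, integral_fourier_two_pi_eq_sinc,
      show -π + 2 * π = π by ring, intervalIntegral.integral_congr fun t _ => hexp t, real_smul,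
      smul_eq_mul]
    push_cast
    field_simp
  have h := hgper.hasSum_fourier_series_of_summable hgcont (-π)
    (by simpa only [hcoeff] using hsum) x
  simp only [hcoeff] at h
  simpa only [fourier_coe_two_pi, smul_eq_mul] using h

theorem HasDerivAt.tendsto_symmetric_slope {𝕜 E : Type*} [NontriviallyNormedField 𝕜] [CharZero 𝕜]
    [NormedAddCommGroup E] [NormedSpace 𝕜 E] {F : 𝕜 → E} {d : E} {x : 𝕜} (h : HasDerivAt F d x) :
    Tendsto (fun t => (2 * t)⁻¹ • (F (x + t) - F (x - t))) (nhdsWithin 0 {0}ᶜ) (nhds d) := by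
  have hright := h.tendsto_slope_zero
  have hneg : Tendsto (fun t : 𝕜 => -t) (nhdsWithin 0 {0}ᶜ) (nhdsWithin 0 {0}ᶜ) := by
    have h := Filter.neg_nhdsNE (a := (0 : 𝕜))
    rw [neg_zero] at h
    exact h.le
  have hleft := hright.comp hneg
  have hsum := (hright.add hleft).const_smul (2⁻¹ : 𝕜)
  rw [← two_smul 𝕜 d, smul_smul, inv_mul_cancel₀ two_ne_zero, one_smul] at hsum
  refine hsum.congr' (eventually_nhdsWithin_of_forall fun t _ => ?_)
  simp only [Function.comp_apply, ← sub_eq_add_neg, inv_neg, neg_smul, ← smul_neg, neg_sub]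
  rw [← smul_add, smul_smul, mul_inv, sub_add_sub_cancel]

theorem lebesgue_means_converge_at_d_points
    (f : ℝ → ℂ) (hper : Function.Periodic f (2 * π))
    (hint : LocallyIntegrable f)
    (F : ℝ → ℂ) (hF : ∀ x : ℝ, F x = ∫ t in (0:ℝ)..x, f t)
    (ε : ℕ → ℝ) (hε : ∀ n, 0 < ε n) (hε0 : Tendsto ε atTop (nhds 0))
    (Λ : ℕ → ℝ → ℂ)
    (hΛ : ∀ n : ℕ, ∀ x : ℝ, HasSum (fun k : ℤ =>
      (if k = 0 then 1 else ((Real.sin (k * ε n) / (k * ε n) : ℝ) : ℂ)) *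
        ((1 / (2 * π) : ℂ) * ∫ t in (-π)..π, f t * Complex.exp (-Complex.I * k * t)) *
        Complex.exp (Complex.I * k * x)) (Λ n x)) :
    (∀ n : ℕ, ∀ x : ℝ, Λ n x = (F (x + ε n) - F (x - ε n)) / (2 * ε n)) ∧
    ∀ x : ℝ, ∀ d : ℂ,
      Tendsto (fun h : ℝ => (F (x + h) - F x) / (h : ℂ))
        (nhdsWithin 0 {0}ᶜ) (nhds d) →
      Tendsto (fun n => Λ n x) atTop (nhds d) := by
  have hmean : ∀ n x, Λ n x = (F (x + ε n) - F (x - ε n)) / (2 * ε n) := by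
    intro n x
    have hsinc := ite_sin_div_eq_sinc (hε n).ne'
    have hsum := (hΛ n 0).summable
    simp only [hsinc, ofReal_zero, mul_zero, Complex.exp_zero, mul_one] at hsum
    rw [(hΛ n x).unique (by simpa only [hsinc] using
      hasSum_sinc_mul_fourier_series hper hint (hε n).ne' hsum x),
      hint.integral_comp_add_eq_sub, ← hF, ← hF, ← sub_eq_add_neg, div_eq_inv_mul]
  refine ⟨hmean, fun x d hd => ?_⟩
  have hderiv : HasDerivAt F d x := hasDerivAt_iff_tendsto_slope_zero.2 <| by
    simpa only [real_smul, ofReal_inv, div_eq_inv_mul] using hd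
  have hε' : Tendsto ε atTop (nhdsWithin 0 {0}ᶜ) :=
    tendsto_nhdsWithin_iff.2 ⟨hε0, .of_forall fun n => (hε n).ne'⟩
  refine (hderiv.tendsto_symmetric_slope.comp hε').congr fun n => ?_
  rw [hmean, Function.comp_apply, real_smul, div_eq_inv_mul]
  push_cast
  rfl
end
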